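/- arXiv:2601.08755 — 2 statements merged into one kernel-verified Lean document; each statement's English description precedes it below -/
import Mathlib

section
/- Assume additionally that V̄₀ is the closure of an open set V₀ ⊆ ℝⁿ with V₀ ≠ ℝⁿ, and that V₀ is a John domain with center x₀ ∈ V₀ and constant κ₀ ∈ (0,1] (for every y ∈ V₀ there exist ℓ ≥ 0 and a 1-Lipschitz curve γ : [0,ℓ] → V₀ with γ(0) = y, γ(ℓ) = x₀, and dist(γ(s), ℝⁿ ∖ V₀) ≥ κ₀ s for all s). Then for every t > 0 the sublevel set { x ∈ Ω̄ : v(x) < t } is contained in the closed ball of center x₀ and radius t/σ_* + dist(x₀, ℝⁿ ∖ V₀)/κ₀. -/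
/-!
Every point of the John domain `V₀` is joined to `x₀` by a 1-Lipschitz curve of length `ℓ` with
`κ₀ ℓ ≤ dist(x₀, ℝⁿ ∖ V₀)`, so `V̄₀` lies in the closed ball of radius `dist(x₀, ℝⁿ ∖ V₀) / κ₀`
around `x₀`. An admissible curve for `x` starts in `V̄₀` and, since `σ(x, q) ≥ σ_* |q|`, costs at
least `σ_*` times its length, hence at least `σ_* (|x - x₀| - dist(x₀, ℝⁿ ∖ V₀) / κ₀)`.
-/

open Set Metric MeasureTheory

noncomputable section

abbrev Euc (n : ℕ) := EuclideanSpace ℝ (Fin n)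

/-- An admissible curve for the point `x`: a Lipschitz curve `γ : [0,1] → ℝⁿ` with values
in `Ω̄`, starting in `V̄₀` and ending at `x`. -/
def IsAdmissible {n : ℕ} (Ω V₀ : Set (Euc n)) (x : Euc n) (γ : ℝ → Euc n) : Prop :=
  (∃ K : NNReal, LipschitzWith K γ) ∧ (∀ s ∈ Icc (0:ℝ) 1, γ s ∈ Ω) ∧ γ 0 ∈ V₀ ∧ γ 1 = x

/-- The cost of a curve: `∫₀¹ σ(γ(s), γ′(s)) ds`. -/
def curveCost {n : ℕ} (σ : Euc n → Euc n → ℝ) (γ : ℝ → Euc n) : ℝ :=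
  ∫ s in (0:ℝ)..1, σ (γ s) (deriv γ s)

/-- The time-of-attachment function: infimum of costs over admissible curves. -/
def timeOfAttachment {n : ℕ} (Ω V₀ : Set (Euc n)) (σ : Euc n → Euc n → ℝ) (x : Euc n) : ℝ :=
  sInf (curveCost σ '' {γ : ℝ → Euc n | IsAdmissible Ω V₀ x γ})

/-- The geodesic distance on `Ω̄`. -/
def geodDist {n : ℕ} (Ω : Set (Euc n)) (x y : Euc n) : ℝ :=
  sInf {L : ℝ | ∃ γ : ℝ → Euc n, (∃ K : NNReal, LipschitzWith K γ) ∧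
    (∀ s ∈ Icc (0:ℝ) 1, γ s ∈ Ω) ∧ γ 0 = y ∧ γ 1 = x ∧
    L = ∫ s in (0:ℝ)..1, ‖deriv γ s‖}

def IsJohnDomain {X : Type*} [PseudoMetricSpace X] (U : Set X) (x₀ : X) (κ : ℝ) : Prop :=
  ∀ y ∈ U, ∃ ℓ : ℝ, 0 ≤ ℓ ∧ ∃ γ : ℝ → X,
    LipschitzOnWith 1 γ (Icc 0 ℓ) ∧ (∀ s ∈ Icc (0:ℝ) ℓ, γ s ∈ U) ∧
    γ 0 = y ∧ γ ℓ = x₀ ∧ ∀ s ∈ Icc (0:ℝ) ℓ, κ * s ≤ infDist (γ s) Uᶜ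

namespace IsJohnDomain

variable {X : Type*} [PseudoMetricSpace X] {U : Set X} {x₀ : X} {κ : ℝ}

theorem subset_closedBall (hU : IsJohnDomain U x₀ κ) (hκ : 0 < κ) :
    U ⊆ closedBall x₀ (infDist x₀ Uᶜ / κ) := by
  intro y hy
  obtain ⟨ℓ, hℓ, γ, hlip, -, rfl, hγℓ, hdist⟩ := hU y hy
  have hℓ_mem : ℓ ∈ Icc 0 ℓ := ⟨hℓ, le_rfl⟩
  have hlength : dist (γ 0) x₀ ≤ ℓ := by
    simpa [hγℓ, Real.dist_eq, abs_of_nonneg hℓ] using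
      hlip.dist_le_mul 0 ⟨le_rfl, hℓ⟩ ℓ hℓ_mem
  have hκℓ : κ * ℓ ≤ infDist x₀ Uᶜ := hγℓ ▸ hdist ℓ hℓ_mem
  exact mem_closedBall.2 (hlength.trans ((le_div_iff₀' hκ).2 hκℓ))

theorem closure_subset_closedBall (hU : IsJohnDomain U x₀ κ) (hκ : 0 < κ) :
    closure U ⊆ closedBall x₀ (infDist x₀ Uᶜ / κ) :=
  closure_minimal (hU.subset_closedBall hκ) isClosed_closedBall

end IsJohnDomain

theorem ContinuousOn.measurable_comp_of_forall_mem {α X Y : Type*} [MeasurableSpace α]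
    [TopologicalSpace X] [MeasurableSpace X] [OpensMeasurableSpace X]
    [TopologicalSpace Y] [MeasurableSpace Y] [BorelSpace Y]
    {f : X → Y} {s : Set X} (hf : ContinuousOn f s) {g : α → X} (hg : Measurable g)
    (hgs : ∀ a, g a ∈ s) : Measurable (fun a => f (g a)) :=
  (continuousOn_iff_continuous_domRestrict.mp hf).measurable.comp (hg.subtype_mk (h := hgs))

section LipschitzCurve

variable {E : Type*} [NormedAddCommGroup E] [NormedSpace ℝ E] [FiniteDimensional ℝ E]
  [MeasurableSpace E] [BorelSpace E]
  {K : NNReal} {γ : ℝ → E}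

theorem LipschitzWith.intervalIntegrable_norm_deriv (hγ : LipschitzWith K γ) (a b : ℝ) :
    IntervalIntegrable (fun s => ‖deriv γ s‖) volume a b :=
  IntervalIntegrable.mono_fun' (g := fun _ => (K : ℝ)) intervalIntegrable_const
    (measurable_deriv γ).norm.aestronglyMeasurable
    (ae_of_all _ fun _ => by simpa using norm_deriv_le_of_lipschitz hγ)

theorem LipschitzWith.norm_sub_le_integral_norm_deriv (hγ : LipschitzWith K γ) {a b : ℝ}
    (hab : a ≤ b) : ‖γ b - γ a‖ ≤ ∫ s in a..b, ‖deriv γ s‖ := by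
  -- Test against a norming functional, to which the real FTC for Lipschitz functions applies.
  obtain ⟨φ, hφ, hφγ⟩ := exists_dual_vector'' ℝ (γ b - γ a)
  have hφγ_lip : LipschitzWith (‖φ‖₊ * K) (φ ∘ γ) := φ.lipschitz.comp hγ
  have hFTC : ∫ s in a..b, deriv (φ ∘ γ) s = ‖γ b - γ a‖ := by
    rw [(hφγ_lip.lipschitzOnWith (s := uIcc a b)).absolutelyContinuousOnInterval
      |>.integral_deriv_eq_sub, Function.comp_apply, Function.comp_apply, ← map_sub, hφγ,
      RCLike.ofReal_real_eq_id, id]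
  rw [← hFTC]
  refine intervalIntegral.integral_mono_ae hab
    hφγ_lip.lipschitzOnWith.absolutelyContinuousOnInterval.intervalIntegrable_deriv
    (hγ.intervalIntegrable_norm_deriv a b) ?_
  filter_upwards [hγ.ae_differentiableAt (μ := volume)] with s hs
  calc deriv (φ ∘ γ) s = φ (deriv γ s) := (φ.hasFDerivAt.comp_hasDerivAt s hs.hasDerivAt).deriv
    _ ≤ ‖φ‖ * ‖deriv γ s‖ := (le_abs_self _).trans (φ.le_opNorm _)
    _ ≤ ‖deriv γ s‖ := mul_le_of_le_one_left (norm_nonneg _) hφ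

end LipschitzCurve

section CurveCost

variable {n : ℕ} {Ω : Set (Euc n)} {σ : Euc n → Euc n → ℝ} {K : NNReal} {γ : ℝ → Euc n}

theorem intervalIntegrable_curveCost_integrand
    (hσ : ContinuousOn (fun p : Euc n × Euc n => σ p.1 p.2) (Ω ×ˢ univ))
    {C : ℝ} (hσC : ∀ x ∈ Ω, ∀ q, |σ x q| ≤ C * ‖q‖)
    (hγ : LipschitzWith K γ) (hγΩ : ∀ s ∈ Icc (0:ℝ) 1, γ s ∈ Ω) :
    IntervalIntegrable (fun s => σ (γ s) (deriv γ s)) volume 0 1 := by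
  -- Clamping the base point to `[0, 1]` keeps it in `Ω`, which makes the integrand measurable.
  set π : ℝ → Icc (0:ℝ) 1 := projIcc 0 1 zero_le_one
  have hπΩ : ∀ s, γ (π s) ∈ Ω := fun s => hγΩ _ (π s).2
  have hF : IntervalIntegrable (fun s => σ (γ (π s)) (deriv γ s)) volume 0 1 := by
    refine IntervalIntegrable.mono_fun' ((hγ.intervalIntegrable_norm_deriv 0 1).const_mul C)
      (hσ.measurable_comp_of_forall_mem (g := fun s => (γ (π s), deriv γ s))
        (((hγ.continuous.comp (continuous_subtype_val.comp continuous_projIcc)).measurable).prodMk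
          (measurable_deriv γ)) fun s => ⟨hπΩ s, mem_univ _⟩).aestronglyMeasurable
      (ae_of_all _ fun s => hσC _ (hπΩ s) _)
  rw [intervalIntegrable_iff_integrableOn_Icc_of_le zero_le_one] at hF ⊢
  exact hF.congr_fun (fun s hs => by simp only [π, projIcc_of_mem _ hs]) measurableSet_Icc

theorem mul_norm_sub_le_curveCost
    (hσ : ContinuousOn (fun p : Euc n × Euc n => σ p.1 p.2) (Ω ×ˢ univ))
    {σl σu : ℝ} (hσl : 0 ≤ σl) (hσbound : ∀ x ∈ Ω, ∀ q, σl * ‖q‖ ≤ σ x q ∧ σ x q ≤ σu * ‖q‖)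
    (hγ : LipschitzWith K γ) (hγΩ : ∀ s ∈ Icc (0:ℝ) 1, γ s ∈ Ω) :
    σl * ‖γ 1 - γ 0‖ ≤ curveCost σ γ := by
  have hσC : ∀ x ∈ Ω, ∀ q, |σ x q| ≤ σu * ‖q‖ := fun x hx q =>
    abs_le.2 ⟨by nlinarith [hσbound x hx q, norm_nonneg q], (hσbound x hx q).2⟩
  calc σl * ‖γ 1 - γ 0‖ ≤ σl * ∫ s in (0:ℝ)..1, ‖deriv γ s‖ :=
        mul_le_mul_of_nonneg_left (hγ.norm_sub_le_integral_norm_deriv zero_le_one) hσl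
    _ = ∫ s in (0:ℝ)..1, σl * ‖deriv γ s‖ := (intervalIntegral.integral_const_mul _ _).symm
    _ ≤ curveCost σ γ :=
        intervalIntegral.integral_mono_on zero_le_one
          ((hγ.intervalIntegrable_norm_deriv 0 1).const_mul σl)
          (intervalIntegrable_curveCost_integrand hσ hσC hγ hγΩ)
          fun s hs => (hσbound _ (hγΩ s hs) _).1

theorem mul_dist_sub_le_timeOfAttachment {V₀ : Set (Euc n)}
    (hσ : ContinuousOn (fun p : Euc n × Euc n => σ p.1 p.2) (Ω ×ˢ univ))
    {σl σu : ℝ} (hσl : 0 ≤ σl) (hσbound : ∀ x ∈ Ω, ∀ q, σl * ‖q‖ ≤ σ x q ∧ σ x q ≤ σu * ‖q‖)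
    {x x₀ : Euc n} {R : ℝ} (hV₀ : V₀ ⊆ closedBall x₀ R)
    (hadm : ∃ γ : ℝ → Euc n, IsAdmissible Ω V₀ x γ) :
    σl * (dist x x₀ - R) ≤ timeOfAttachment Ω V₀ σ x := by
  obtain ⟨γ₀, hγ₀⟩ := hadm
  refine le_csInf ⟨_, mem_image_of_mem _ hγ₀⟩ ?_
  rintro _ ⟨γ, ⟨⟨K, hγ⟩, hγΩ, hγ0, rfl⟩, rfl⟩
  have hchord : dist (γ 1) x₀ - R ≤ ‖γ 1 - γ 0‖ := by
    linarith [dist_triangle (γ 1) (γ 0) x₀, mem_closedBall.1 (hV₀ hγ0), dist_eq_norm (γ 1) (γ 0)]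
  exact (mul_le_mul_of_nonneg_left hchord hσl).trans
    (mul_norm_sub_le_curveCost hσ hσl hσbound hγ hγΩ)

end CurveCost

theorem sublevel_sets_bounded_general
    {n : ℕ}
    (Ω V₀ : Set (Euc n))
    (σl σu : ℝ) (hσl : 0 < σl)
    (σ : Euc n → Euc n → ℝ)
    (hσcont : ContinuousOn (fun p : Euc n × Euc n => σ p.1 p.2) (Ω ×ˢ (univ : Set (Euc n))))
    (hσbound : ∀ x ∈ Ω, ∀ q : Euc n, σl * ‖q‖ ≤ σ x q ∧ σ x q ≤ σu * ‖q‖)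
    (hadm : ∀ x ∈ Ω, ∃ γ : ℝ → Euc n, IsAdmissible Ω V₀ x γ)
    (v : Euc n → ℝ)
    (hv : ∀ x ∈ Ω, v x = timeOfAttachment Ω V₀ σ x)
    (V₀' : Set (Euc n))
    (hclos : V₀ = closure V₀')
    (x₀ : Euc n) (κ₀ : ℝ) (hκ₀ : κ₀ ∈ Ioc (0:ℝ) 1)
    (hjohn : ∀ y ∈ V₀', ∃ ℓ : ℝ, 0 ≤ ℓ ∧ ∃ γ : ℝ → Euc n,
      LipschitzOnWith 1 γ (Icc 0 ℓ) ∧ (∀ s ∈ Icc (0:ℝ) ℓ, γ s ∈ V₀') ∧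
      γ 0 = y ∧ γ ℓ = x₀ ∧ ∀ s ∈ Icc (0:ℝ) ℓ, κ₀ * s ≤ infDist (γ s) V₀'ᶜ) :
    ∀ t : ℝ, 0 < t →
      {x ∈ Ω | v x < t} ⊆ closedBall x₀ (t / σl + infDist x₀ V₀'ᶜ / κ₀) := by
  rintro t - x ⟨hxΩ, hxt⟩
  have hV₀ : V₀ ⊆ closedBall x₀ (infDist x₀ V₀'ᶜ / κ₀) :=
    hclos ▸ IsJohnDomain.closure_subset_closedBall hjohn hκ₀.1
  have hcost := mul_dist_sub_le_timeOfAttachment hσcont hσl.le hσbound hV₀ (hadm x hxΩ)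
  rw [← hv x hxΩ] at hcost
  have : dist x x₀ - infDist x₀ V₀'ᶜ / κ₀ < t / σl :=
    (lt_div_iff₀' hσl).2 (hcost.trans_lt hxt)
  exact mem_closedBall.2 (by linarith)

/-- If V̄₀ is the closure of an open John domain V₀ with center x₀ and
constant κ₀, then for every t > 0 the sublevel set {v < t} is contained in the closed
ball of center x₀ and radius t/σ_* + dist(x₀, ℝⁿ∖V₀)/κ₀. -/
theorem sublevel_sets_bounded
    {n : ℕ} (hn : 1 ≤ n)
    (Ω V₀ : Set (Euc n)) (hΩne : Ω.Nonempty) (hΩcl : IsClosed Ω)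
    (hV₀ne : V₀.Nonempty) (hV₀cl : IsClosed V₀) (hV₀sub : V₀ ⊆ Ω)
    (σl σu : ℝ) (hσl : 0 < σl) (hσlu : σl ≤ σu)
    (σ : Euc n → Euc n → ℝ)
    (hσcont : ContinuousOn (fun p : Euc n × Euc n => σ p.1 p.2) (Ω ×ˢ (univ : Set (Euc n))))
    (hσbound : ∀ x ∈ Ω, ∀ q : Euc n, σl * ‖q‖ ≤ σ x q ∧ σ x q ≤ σu * ‖q‖)
    (hadm : ∀ x ∈ Ω, ∃ γ : ℝ → Euc n, IsAdmissible Ω V₀ x γ)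
    (v : Euc n → ℝ) (hvnonneg : ∀ x ∈ Ω, 0 ≤ v x)
    (hv : ∀ x ∈ Ω, v x = timeOfAttachment Ω V₀ σ x)
    (V₀' : Set (Euc n)) (hV₀'open : IsOpen V₀') (hV₀'ne : V₀' ≠ (univ : Set (Euc n)))
    (hclos : V₀ = closure V₀')
    (x₀ : Euc n) (hx₀ : x₀ ∈ V₀') (κ₀ : ℝ) (hκ₀ : κ₀ ∈ Ioc (0:ℝ) 1)
    (hjohn : ∀ y ∈ V₀', ∃ ℓ : ℝ, 0 ≤ ℓ ∧ ∃ γ : ℝ → Euc n,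
      LipschitzOnWith 1 γ (Icc 0 ℓ) ∧ (∀ s ∈ Icc (0:ℝ) ℓ, γ s ∈ V₀') ∧
      γ 0 = y ∧ γ ℓ = x₀ ∧ ∀ s ∈ Icc (0:ℝ) ℓ, κ₀ * s ≤ infDist (γ s) V₀'ᶜ) :
    ∀ t : ℝ, 0 < t →
      {x ∈ Ω | v x < t} ⊆ closedBall x₀ (t / σl + infDist x₀ V₀'ᶜ / κ₀) :=
  sublevel_sets_bounded_general Ω V₀ σl σu hσl σ hσcont hσbound hadm v hv V₀' hclos x₀ κ₀ hκ₀ hjohn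
end
end

section
/- Let x ∈ Ω̄ and let γ be an admissible curve for x whose cost equals v(x) and which has constant speed: |γ′(s)| = ℓ_γ > 0 for almost every s ∈ (0,1). Let φ : ℝⁿ → ℝ be continuously differentiable, and suppose there exist λ ∈ (0,1) and t ∈ (0,1) such that γ′(s) · ∇φ(γ(s)) ≤ λ σ(γ(s), γ′(s)) for almost every s ∈ (t,1). Then φ(x) − φ(γ(t)) ≤ v(x) − v(γ(t)) + (λ − 1)(1 − t) ℓ_γ σ_*; in particular φ(x) − φ(γ(t)) < v(x) − v(γ(t)). -/
open Set Metric MeasureTheory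

noncomputable section

open Filter Topology

/-!
Stopping `γ` at time `t` gives an admissible curve for `γ t` whose cost is the cost of `γ` on
`[0, t]`, so optimality of `γ` bounds the cost of `γ` on `[t, 1]` by `v x - v (γ t)`. On the
other hand `φ ∘ γ` is locally Lipschitz, hence absolutely continuous, so `φ x - φ (γ t)` is the
integral of `Dφ(γ) γ'` over `[t, 1]`, which is at most `λ` times that cost; and the cost is at
least `σ_* ℓ_γ (1 - t)`.
-/

theorem ContinuousOn.aestronglyMeasurable_comp_of_ae_mem {α β γ : Type*} [MeasurableSpace α]
    [TopologicalSpace β] [MeasurableSpace β] [OpensMeasurableSpace β] [TopologicalSpace γ]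
    [SecondCountableTopologyEither β γ] [TopologicalSpace.PseudoMetrizableSpace γ]
    {g : β → γ} {s : Set β} {f : α → β} {μ : Measure α}
    (hg : ContinuousOn g s) (hs : MeasurableSet s) (hf : Measurable f)
    (hfs : ∀ᵐ a ∂μ, f a ∈ s) : AEStronglyMeasurable (g ∘ f) μ := by
  have hmap : (μ.map f).restrict s = μ.map f :=
    Measure.restrict_eq_self_of_ae_mem ((ae_map_iff hf.aemeasurable hs).2 hfs)
  exact (hmap ▸ hg.aestronglyMeasurable hs).comp_measurable hf

section StoppedCurve

variable {E : Type*} [NormedAddCommGroup E] [NormedSpace ℝ E] {γ : ℝ → E} {s t : ℝ}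

theorem deriv_comp_min_of_lt (h : s < t) : deriv (fun r => γ (min r t)) s = deriv γ s := by
  have hloc : (fun r => γ (min r t)) =ᶠ[𝓝 s] γ :=
    eventually_of_mem (Iio_mem_nhds h) fun r hr => congrArg γ (min_eq_left (le_of_lt hr))
  exact hloc.deriv_eq

theorem deriv_comp_min_of_gt (h : t < s) : deriv (fun r => γ (min r t)) s = 0 := by
  have hloc : (fun r => γ (min r t)) =ᶠ[𝓝 s] fun _ => γ t :=
    eventually_of_mem (Ioi_mem_nhds h) fun r hr => congrArg γ (min_eq_right (le_of_lt hr))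
  rw [hloc.deriv_eq, deriv_const]

end StoppedCurve

section Chain

variable {E : Type*} [NormedAddCommGroup E] [NormedSpace ℝ E]
  {φ : E → ℝ} {γ : ℝ → E} {K : NNReal}

theorem ContDiff.absolutelyContinuousOnInterval_comp (hφ : ContDiff ℝ 1 φ)
    (hγ : LipschitzWith K γ) (a b : ℝ) : AbsolutelyContinuousOnInterval (φ ∘ γ) a b := by
  obtain ⟨L, hL⟩ := ((hφ.locallyLipschitz.comp hγ.locallyLipschitz).locallyLipschitzOn
    (s := uIcc a b)).exists_lipschitzOnWith_of_compact isCompact_uIcc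
  exact hL.absolutelyContinuousOnInterval

theorem ContDiff.deriv_comp_ae_eq [FiniteDimensional ℝ E] (hφ : ContDiff ℝ 1 φ)
    (hγ : LipschitzWith K γ) :
    deriv (φ ∘ γ) =ᵐ[volume] fun s => fderiv ℝ φ (γ s) (deriv γ s) := by
  filter_upwards [hγ.ae_differentiableAt] with s hs
  exact ((hφ.differentiable one_ne_zero (γ s)).hasFDerivAt.comp_hasDerivAt s hs.hasDerivAt).deriv

theorem ContDiff.intervalIntegrable_fderiv_apply_deriv [FiniteDimensional ℝ E]
    (hφ : ContDiff ℝ 1 φ) (hγ : LipschitzWith K γ) (a b : ℝ) :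
    IntervalIntegrable (fun s => fderiv ℝ φ (γ s) (deriv γ s)) volume a b :=
  (hφ.absolutelyContinuousOnInterval_comp hγ a b).intervalIntegrable_deriv.congr_ae
    (ae_restrict_of_ae (hφ.deriv_comp_ae_eq hγ))

theorem ContDiff.integral_fderiv_apply_deriv [FiniteDimensional ℝ E] (hφ : ContDiff ℝ 1 φ)
    (hγ : LipschitzWith K γ) (a b : ℝ) :
    ∫ s in a..b, fderiv ℝ φ (γ s) (deriv γ s) = φ (γ b) - φ (γ a) := by
  calc ∫ s in a..b, fderiv ℝ φ (γ s) (deriv γ s) = ∫ s in a..b, deriv (φ ∘ γ) s :=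
        intervalIntegral.integral_congr_ae ((hφ.deriv_comp_ae_eq hγ).mono fun s hs _ => hs.symm)
    _ = φ (γ b) - φ (γ a) := (hφ.absolutelyContinuousOnInterval_comp hγ a b).integral_deriv_eq_sub

end Chain

section Attachment

variable {n : ℕ} {Ω V₀ : Set (Euc n)} {σ : Euc n → Euc n → ℝ} {x : Euc n} {γ : ℝ → Euc n}

theorem IsAdmissible.comp_min (hγ : IsAdmissible Ω V₀ x γ) {t : ℝ} (ht : t ∈ Icc (0:ℝ) 1) :
    IsAdmissible Ω V₀ (γ t) (fun s => γ (min s t)) := by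
  obtain ⟨⟨K, hK⟩, hγΩ, hγ0, -⟩ := hγ
  refine ⟨⟨_, hK.comp (LipschitzWith.id.min (LipschitzWith.const t))⟩,
    fun s hs => hγΩ _ ⟨le_min hs.1 ht.1, (min_le_left _ _).trans hs.2⟩, ?_, ?_⟩
  · show γ (min 0 t) ∈ V₀
    rwa [min_eq_left ht.1]
  · show γ (min 1 t) = γ t
    rw [min_eq_right ht.2]

theorem curveCost_comp_min (γ : ℝ → Euc n) {t : ℝ} (ht : t ∈ Icc (0:ℝ) 1)
    (hσ0 : σ (γ t) 0 = 0) :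
    curveCost σ (fun s => γ (min s t)) = ∫ s in 0..t, σ (γ s) (deriv γ s) := by
  have hstop : ∀ᵐ s, σ (γ (min s t)) (deriv (fun r => γ (min r t)) s)
      = (Iic t).indicator (fun s => σ (γ s) (deriv γ s)) s := by
    filter_upwards [Measure.ae_ne volume t] with s hs
    rcases hs.lt_or_gt with h | h
    · rw [indicator_of_mem (mem_Iic.2 h.le), min_eq_left h.le, deriv_comp_min_of_lt h]
    · rw [indicator_of_notMem (notMem_Iic.2 h), min_eq_right h.le, deriv_comp_min_of_gt h, hσ0]
  rw [curveCost, intervalIntegral.integral_of_le zero_le_one, intervalIntegral.integral_of_le ht.1,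
    integral_congr_ae (ae_restrict_of_ae hstop), setIntegral_indicator measurableSet_Iic,
    Ioc_inter_Iic, min_eq_right ht.2]

theorem timeOfAttachment_le_curveCost (hσ : ∀ y ∈ Ω, ∀ q, 0 ≤ σ y q) {β : ℝ → Euc n}
    (hβ : IsAdmissible Ω V₀ x β) : timeOfAttachment Ω V₀ σ x ≤ curveCost σ β := by
  refine csInf_le ⟨0, ?_⟩ ⟨β, hβ, rfl⟩
  rintro _ ⟨β', hβ', rfl⟩
  exact intervalIntegral.integral_nonneg zero_le_one fun s hs => hσ _ (hβ'.2.1 s hs) _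

theorem IsAdmissible.integrableOn_cost {C : ℝ} (hΩ : IsClosed Ω)
    (hσcont : ContinuousOn (fun p : Euc n × Euc n => σ p.1 p.2) (Ω ×ˢ (univ : Set (Euc n))))
    (hσ : ∀ y ∈ Ω, ∀ q, 0 ≤ σ y q ∧ σ y q ≤ C * ‖q‖) (hγ : IsAdmissible Ω V₀ x γ) :
    IntegrableOn (fun s => σ (γ s) (deriv γ s)) (Icc 0 1) := by
  obtain ⟨⟨K, hK⟩, hγΩ, -, -⟩ := hγ
  have hmem : ∀ᵐ s ∂volume.restrict (Icc (0:ℝ) 1), γ s ∈ Ω :=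
    (ae_restrict_mem measurableSet_Icc).mono hγΩ
  have hmeas : AEStronglyMeasurable (fun s => σ (γ s) (deriv γ s)) (volume.restrict (Icc 0 1)) :=
    hσcont.aestronglyMeasurable_comp_of_ae_mem (f := fun s => (γ s, deriv γ s))
      (hΩ.measurableSet.prod MeasurableSet.univ)
      (hK.continuous.measurable.prodMk (measurable_deriv γ))
      (hmem.mono fun s hs => ⟨hs, trivial⟩)
  have hspeed : IntegrableOn (fun s => ‖deriv γ s‖) (Icc 0 1) :=
    Measure.integrableOn_of_bounded measure_Icc_lt_top.ne
      (measurable_deriv γ).norm.aestronglyMeasurable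
      (ae_of_all _ fun s => by simpa using norm_deriv_le_of_lipschitz hK)
  refine (hspeed.const_mul C).mono' hmeas (hmem.mono fun s hs => ?_)
  rw [Real.norm_eq_abs, abs_of_nonneg (hσ _ hs _).1]
  exact (hσ _ hs _).2

theorem IsAdmissible.timeOfAttachment_add_integral_le {C : ℝ} (hΩ : IsClosed Ω)
    (hσcont : ContinuousOn (fun p : Euc n × Euc n => σ p.1 p.2) (Ω ×ˢ (univ : Set (Euc n))))
    (hσ : ∀ y ∈ Ω, ∀ q, 0 ≤ σ y q ∧ σ y q ≤ C * ‖q‖) (hγ : IsAdmissible Ω V₀ x γ)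
    {t : ℝ} (ht : t ∈ Icc (0:ℝ) 1) :
    timeOfAttachment Ω V₀ σ (γ t) + ∫ s in t..1, σ (γ s) (deriv γ s) ≤ curveCost σ γ := by
  have hint := hγ.integrableOn_cost hΩ hσcont hσ
  have hγt : γ t ∈ Ω := hγ.2.1 t ht
  have hσ0 : σ (γ t) 0 = 0 :=
    le_antisymm (by simpa using (hσ _ hγt 0).2) (hσ _ hγt 0).1
  rw [curveCost, ← intervalIntegral.integral_add_adjacent_intervals
    (hint.mono_set (uIcc_subset_Icc (left_mem_Icc.2 zero_le_one) ht)).intervalIntegrable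
    (hint.mono_set (uIcc_subset_Icc ht (right_mem_Icc.2 zero_le_one))).intervalIntegrable,
    ← curveCost_comp_min γ ht hσ0]
  exact add_le_add_left (timeOfAttachment_le_curveCost (fun y hy q => (hσ y hy q).1)
    (hγ.comp_min ht)) _

theorem mul_le_integral_cost_of_norm_deriv_eq {a b σl ℓ : ℝ} (hab : a ≤ b)
    (hσ : ∀ y ∈ Ω, ∀ q, σl * ‖q‖ ≤ σ y q) (hγΩ : ∀ s ∈ Ioo a b, γ s ∈ Ω)
    (hint : IntervalIntegrable (fun s => σ (γ s) (deriv γ s)) volume a b)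
    (hspeed : ∀ᵐ s ∂volume.restrict (Ioo a b), ‖deriv γ s‖ = ℓ) :
    (b - a) * (σl * ℓ) ≤ ∫ s in a..b, σ (γ s) (deriv γ s) := by
  rw [← smul_eq_mul, ← intervalIntegral.integral_const]
  refine intervalIntegral.integral_mono_ae_restrict hab intervalIntegrable_const hint ?_
  rw [← Measure.restrict_congr_set Ioo_ae_eq_Icc]
  filter_upwards [hspeed, ae_restrict_mem measurableSet_Ioo] with s hs hsab
  rw [← hs]
  exact hσ _ (hγΩ s hsab) _

end Attachment

theorem test_function_strict_decrease_general
    {n : ℕ}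
    (Ω V₀ : Set (Euc n)) (hΩcl : IsClosed Ω)
    (σl σu : ℝ) (hσl : 0 < σl)
    (σ : Euc n → Euc n → ℝ)
    (hσcont : ContinuousOn (fun p : Euc n × Euc n => σ p.1 p.2) (Ω ×ˢ (univ : Set (Euc n))))
    (hσbound : ∀ x ∈ Ω, ∀ q : Euc n, σl * ‖q‖ ≤ σ x q ∧ σ x q ≤ σu * ‖q‖)
    (v : Euc n → ℝ)
    (hv : ∀ x ∈ Ω, v x = timeOfAttachment Ω V₀ σ x)
    (x : Euc n)
    (γ : ℝ → Euc n) (hγ : IsAdmissible Ω V₀ x γ) (hopt : curveCost σ γ = v x)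
    (ℓγ : ℝ) (hℓγ : 0 < ℓγ)
    (hspeed : ∀ᵐ s ∂(volume.restrict (Ioo (0:ℝ) 1)), ‖deriv γ s‖ = ℓγ)
    (φ : Euc n → ℝ) (hφ : ContDiff ℝ 1 φ)
    (lam t : ℝ) (hlam : lam ∈ Ioo (0:ℝ) 1) (ht : t ∈ Ioo (0:ℝ) 1)
    (hineq : ∀ᵐ s ∂(volume.restrict (Ioo t 1)),
      fderiv ℝ φ (γ s) (deriv γ s) ≤ lam * σ (γ s) (deriv γ s)) :
    φ x - φ (γ t) ≤ v x - v (γ t) + (lam - 1) * (1 - t) * ℓγ * σl ∧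
    φ x - φ (γ t) < v x - v (γ t) := by
  have ⟨⟨K, hK⟩, hγΩ, _, hγ1⟩ := hγ
  have ht' : t ∈ Icc (0:ℝ) 1 := Ioo_subset_Icc_self ht
  have hσ : ∀ y ∈ Ω, ∀ q, 0 ≤ σ y q ∧ σ y q ≤ σu * ‖q‖ := fun y hy q =>
    ⟨(mul_nonneg hσl.le (norm_nonneg q)).trans (hσbound y hy q).1, (hσbound y hy q).2⟩
  set I := ∫ s in t..1, σ (γ s) (deriv γ s)
  have hdp : v (γ t) + I ≤ v x := by
    rw [hv _ (hγΩ t ht'), ← hopt]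
    exact hγ.timeOfAttachment_add_integral_le hΩcl hσcont hσ ht'
  have hint : IntervalIntegrable (fun s => σ (γ s) (deriv γ s)) volume t 1 :=
    ((hγ.integrableOn_cost hΩcl hσcont hσ).mono_set
      (uIcc_subset_Icc ht' (right_mem_Icc.2 zero_le_one))).intervalIntegrable
  have hlow : (1 - t) * (σl * ℓγ) ≤ I :=
    mul_le_integral_cost_of_norm_deriv_eq ht.2.le (fun y hy q => (hσbound y hy q).1)
      (fun s hs => hγΩ s ⟨ht.1.le.trans hs.1.le, hs.2.le⟩) hint
      (ae_restrict_of_ae_restrict_of_subset (Ioo_subset_Ioo_left ht.1.le) hspeed)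
  have hφI : φ x - φ (γ t) ≤ lam * I := by
    rw [← hγ1, ← hφ.integral_fderiv_apply_deriv hK, ← intervalIntegral.integral_const_mul]
    refine intervalIntegral.integral_mono_ae_restrict ht.2.le
      (hφ.intervalIntegrable_fderiv_apply_deriv hK t 1) (hint.const_mul lam) ?_
    rwa [← Measure.restrict_congr_set Ioo_ae_eq_Icc]
  have hslack : (lam - 1) * I ≤ (lam - 1) * ((1 - t) * (σl * ℓγ)) :=
    mul_le_mul_of_nonpos_left hlow (sub_nonpos.2 hlam.2.le)
  have hgap : (lam - 1) * ((1 - t) * (σl * ℓγ)) < 0 :=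
    mul_neg_of_neg_of_pos (sub_neg.2 hlam.2) (mul_pos (sub_pos.2 ht.2) (mul_pos hσl hℓγ))
  constructor <;> linarith

/-- Along a constant-speed optimal curve, if the directional derivative
of φ is controlled by λσ on (t,1), then φ(x) − φ(γ(t)) ≤ v(x) − v(γ(t)) + (λ−1)(1−t)ℓ_γσ_*,
and in particular φ(x) − φ(γ(t)) < v(x) − v(γ(t)). -/
theorem test_function_strict_decrease
    {n : ℕ} (hn : 1 ≤ n)
    (Ω V₀ : Set (Euc n)) (hΩne : Ω.Nonempty) (hΩcl : IsClosed Ω)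
    (hV₀ne : V₀.Nonempty) (hV₀cl : IsClosed V₀) (hV₀sub : V₀ ⊆ Ω)
    (σl σu : ℝ) (hσl : 0 < σl) (hσlu : σl ≤ σu)
    (σ : Euc n → Euc n → ℝ)
    (hσcont : ContinuousOn (fun p : Euc n × Euc n => σ p.1 p.2) (Ω ×ˢ (univ : Set (Euc n))))
    (hσbound : ∀ x ∈ Ω, ∀ q : Euc n, σl * ‖q‖ ≤ σ x q ∧ σ x q ≤ σu * ‖q‖)
    (hadm : ∀ x ∈ Ω, ∃ γ : ℝ → Euc n, IsAdmissible Ω V₀ x γ)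
    (v : Euc n → ℝ) (hvnonneg : ∀ x ∈ Ω, 0 ≤ v x)
    (hv : ∀ x ∈ Ω, v x = timeOfAttachment Ω V₀ σ x)
    (x : Euc n) (hx : x ∈ Ω)
    (γ : ℝ → Euc n) (hγ : IsAdmissible Ω V₀ x γ) (hopt : curveCost σ γ = v x)
    (ℓγ : ℝ) (hℓγ : 0 < ℓγ)
    (hspeed : ∀ᵐ s ∂(volume.restrict (Ioo (0:ℝ) 1)), ‖deriv γ s‖ = ℓγ)
    (φ : Euc n → ℝ) (hφ : ContDiff ℝ 1 φ)
    (lam t : ℝ) (hlam : lam ∈ Ioo (0:ℝ) 1) (ht : t ∈ Ioo (0:ℝ) 1)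
    (hineq : ∀ᵐ s ∂(volume.restrict (Ioo t 1)),
      fderiv ℝ φ (γ s) (deriv γ s) ≤ lam * σ (γ s) (deriv γ s)) :
    φ x - φ (γ t) ≤ v x - v (γ t) + (lam - 1) * (1 - t) * ℓγ * σl ∧
    φ x - φ (γ t) < v x - v (γ t) :=
  test_function_strict_decrease_general Ω V₀ hΩcl σl σu hσl σ hσcont hσbound v hv x γ hγ hopt ℓγ hℓγ
    hspeed φ hφ lam t hlam ht hineq
end
end
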